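/- There is a universal constant C such that for all j ≥ 1, L ≥ 1, B ≥ 2, and every z_j, the Rademacher complexity of the class G_{z_j} satisfies (1/B)·Rad_B(G_{z_j}) ≤ C·√(j·L²·log(j·L·B)/B). Consequently, if M ≤ N/2 and B = N−M+j+1, then sup_{z_j}(1/B)·Rad_B(G_{z_j}) ≤ C·√(2·j·L²·log(j·L·N/2)/N). -/

import Mathlib

/-!
Massart's finite-class lemma bounds the Rademacher average of finitely many vectors with
entries in `[-c, c]` by `c √(2 B log N)`: the moment generating function of a Rademacher sum is
a product of `cosh`s, `cosh x ≤ exp (x² / 2)`, and Jensen's inequality for `log` moves the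
average inside.

Every function of `G_{z_j}` takes values in `[-2L, 2L]`, since the two suprema defining it are
over terms that differ only in `2L ε_{j+1} h(x)`; and it depends `2L`-Lipschitzly on the labels
`y ∈ [0,1]^j` in `ℓ¹`, through the Lipschitz loss. Rounding the labels to the grid
`{0, 1/K, …, 1}^j` with `K = ⌈jLB⌉` therefore costs at most `2` in the Rademacher sum, and
Massart's lemma over the `(K+1)^j` grid points gives `Rad_B ≤ 2L √(2Bj log(K+1)) + 2`, which is
at most `6 B √(jL² log(jLB)/B)`. The second claim follows from `N = B + m ≤ 2B`.
-/

open MeasureTheory Real Set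

noncomputable section

/-- sign of a boolean coin flip -/
def sgn (b : Bool) : ℝ := if b then 1 else -1

/-- `ℓ` is `L`-Lipschitz in both arguments (on `[0,1]`). -/
def LossLip (ℓ : ℝ → ℝ → ℝ) (L : ℝ) : Prop :=
  (∀ y ∈ Icc (0:ℝ) 1, ∀ a ∈ Icc (0:ℝ) 1, ∀ b ∈ Icc (0:ℝ) 1, |ℓ a y - ℓ b y| ≤ L * |a - b|) ∧
  (∀ z ∈ Icc (0:ℝ) 1, ∀ a ∈ Icc (0:ℝ) 1, ∀ b ∈ Icc (0:ℝ) 1, |ℓ z a - ℓ z b| ≤ L * |a - b|)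

/-- `ℓ` is nonnegative. -/
def LossNonneg (ℓ : ℝ → ℝ → ℝ) : Prop := ∀ a b, 0 ≤ ℓ a b

/-- The unit interval `[0,1]` as a type. -/
abbrev UI : Type := Set.Icc (0:ℝ) 1

/-- The function `f_{z_j,y^j}` of display (8). -/
def fz {X : Type} (H : Set (X → ℝ)) (ℓ : ℝ → ℝ → ℝ) (L : ℝ) {j m : ℕ}
    (xj : Fin j → X) (xt : Fin m → X) (ε0 : Bool) (εr : Fin m → Bool)
    (y : Fin j → ℝ) (x : X) : ℝ :=
  ⨆ h : H, (2 * L * sgn ε0 * h.1 x + 2 * L * ∑ i, sgn (εr i) * h.1 (xt i) -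
    ∑ i, ℓ (h.1 (xj i)) (y i))

/-- The Rademacher complexity at horizon `B` of the class
`G_{z_j} = {(x,x') ↦ f_{z_j,y^j}(x') − f_{z_j,y^j}(x) : y^j ∈ [0,1]^j}` of functions on
`X × X`. -/
def radG {X : Type} (H : Set (X → ℝ)) (ℓ : ℝ → ℝ → ℝ) (L : ℝ) {j m : ℕ}
    (xj : Fin j → X) (xt : Fin m → X) (ε0 : Bool) (εr : Fin m → Bool) (B : ℕ) : ℝ :=
  ⨆ pts : Fin B → X × X,
    (∑ ε : Fin B → Bool, ⨆ yv : Fin j → UI,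
      ∑ i, sgn (ε i) *
        (fz H ℓ L xj xt ε0 εr (fun i' => (yv i' : ℝ)) (pts i).2 -
          fz H ℓ L xj xt ε0 εr (fun i' => (yv i' : ℝ)) (pts i).1)) / 2 ^ B


@[simp] lemma sgn_true : sgn true = 1 := rfl

@[simp] lemma sgn_false : sgn false = -1 := rfl

@[simp] lemma abs_sgn (b : Bool) : |sgn b| = 1 := by cases b <;> simp

lemma sgn_mul_le_abs (b : Bool) (t : ℝ) : sgn b * t ≤ |t| := by
  simpa [abs_mul] using le_abs_self (sgn b * t)

def empiricalRad {Q : Type} {B : ℕ} (a : Q → Fin B → ℝ) : ℝ :=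
  (∑ ε : Fin B → Bool, ⨆ q, ∑ i, sgn (ε i) * a q i) / 2 ^ B

lemma sum_signs_exp_eq (B : ℕ) (a : Fin B → ℝ) :
    ∑ ε : Fin B → Bool, exp (∑ i, sgn (ε i) * a i) = 2 ^ B * ∏ i, cosh (a i) := by
  have hpair : ∀ i, ∑ b : Bool, exp (sgn b * a i) = 2 * cosh (a i) := fun i => by
    simp [Real.cosh_eq]; ring
  simp only [Real.exp_sum]
  rw [← Fintype.prod_sum (fun i b => exp (sgn b * a i))]
  simp only [hpair, Finset.prod_mul_distrib, Finset.prod_const, Finset.card_univ,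
    Fintype.card_fin]

lemma iSup_le_log_sum_exp {Q : Type} [Fintype Q] [Nonempty Q] (x : Q → ℝ) {t : ℝ}
    (ht : 0 < t) : ⨆ q, x q ≤ log (∑ q, exp (t * x q)) / t := by
  refine ciSup_le fun q => (le_div_iff₀' ht).2 ?_
  rw [← Real.log_exp (t * x q)]
  exact Real.log_le_log (Real.exp_pos _)
    (Finset.single_le_sum (f := fun q => exp (t * x q)) (fun q _ => (Real.exp_pos _).le)
      (Finset.mem_univ q))

lemma sum_log_div_le_log_sum_div {ι : Type} [Fintype ι] [Nonempty ι] (G : ι → ℝ)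
    (hG : ∀ i, 0 < G i) :
    (∑ i, log (G i)) / Fintype.card ι ≤ log ((∑ i, G i) / Fintype.card ι) := by
  have hw : ∑ _i : ι, (Fintype.card ι : ℝ)⁻¹ = 1 := by simp
  have := strictConcaveOn_log_Ioi.concaveOn.le_map_sum (t := Finset.univ)
    (fun _ _ => by positivity) hw (fun i _ => hG i)
  simpa [smul_eq_mul, ← Finset.mul_sum, div_eq_inv_mul] using this

lemma prod_cosh_le {B : ℕ} (a : Fin B → ℝ) {c : ℝ} (ha : ∀ i, |a i| ≤ c) :
    ∏ i, cosh (a i) ≤ exp (B * c ^ 2 / 2) := by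
  calc ∏ i, cosh (a i) ≤ ∏ _i : Fin B, exp (c ^ 2 / 2) := by
        refine Finset.prod_le_prod (fun i _ => (Real.cosh_pos _).le) fun i _ =>
          (Real.cosh_le_exp_half_sq _).trans (Real.exp_le_exp.2 ?_)
        have := sq_le_sq' (abs_le.1 (ha i)).1 (abs_le.1 (ha i)).2
        linarith
    _ = exp (B * c ^ 2 / 2) := by
        rw [Finset.prod_const, Finset.card_univ, Fintype.card_fin, ← Real.exp_nat_mul]
        ring_nf

section Massart

variable {Q : Type} [Fintype Q] [Nonempty Q] {B : ℕ} (a : Q → Fin B → ℝ) {c : ℝ}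

lemma empiricalRad_le_log_card_add_div {t : ℝ} (ht : 0 < t) (ha : ∀ q i, |a q i| ≤ c) :
    empiricalRad a ≤ (log (Fintype.card Q) + t ^ 2 * (B * c ^ 2) / 2) / t := by
  set G : (Fin B → Bool) → ℝ := fun ε => ∑ q, exp (t * ∑ i, sgn (ε i) * a q i)
  have hG : ∀ ε, 0 < G ε := fun ε =>
    Finset.sum_pos (fun q _ => Real.exp_pos _) Finset.univ_nonempty
  have hcard : (Fintype.card (Fin B → Bool) : ℝ) = 2 ^ B := by simp
  have hmgf : (∑ ε, G ε) / 2 ^ B ≤ Fintype.card Q * exp (t ^ 2 * (B * c ^ 2) / 2) := by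
    have hq : ∀ q, ∑ ε : Fin B → Bool, exp (t * ∑ i, sgn (ε i) * a q i)
        = 2 ^ B * ∏ i, cosh (t * a q i) := fun q => by
      simp only [Finset.mul_sum, mul_left_comm t]
      exact sum_signs_exp_eq B _
    rw [Finset.sum_comm, div_le_iff₀ (by positivity), ← nsmul_eq_mul, ← Finset.card_univ,
      ← Finset.sum_const]
    simp only [hq, Finset.sum_mul]
    refine Finset.sum_le_sum fun q _ => ?_
    rw [mul_comm]
    gcongr
    refine (prod_cosh_le _ (c := t * c) fun i => ?_).trans_eq (by ring_nf)
    rw [abs_mul, abs_of_pos ht]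
    exact mul_le_mul_of_nonneg_left (ha q i) ht.le
  calc empiricalRad a ≤ (∑ ε, log (G ε) / t) / 2 ^ B := by
        unfold empiricalRad
        gcongr with ε
        exact iSup_le_log_sum_exp _ ht
    _ = (∑ ε, log (G ε)) / Fintype.card (Fin B → Bool) / t := by
        rw [hcard, ← Finset.sum_div]; ring
    _ ≤ log ((∑ ε, G ε) / 2 ^ B) / t := by
        rw [← hcard]; gcongr; exact sum_log_div_le_log_sum_div G hG
    _ ≤ log (Fintype.card Q * exp (t ^ 2 * (B * c ^ 2) / 2)) / t := by
        gcongr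
    _ = (log (Fintype.card Q) + t ^ 2 * (B * c ^ 2) / 2) / t := by
        rw [Real.log_mul (by positivity) (Real.exp_pos _).ne', Real.log_exp]

theorem empiricalRad_le_massart (hc : 0 < c) (hB : 0 < B) (hQ : 2 ≤ Fintype.card Q)
    (ha : ∀ q i, |a q i| ≤ c) :
    empiricalRad a ≤ c * √(2 * B * log (Fintype.card Q)) := by
  have hlog : 0 < log (Fintype.card Q) := Real.log_pos (by exact_mod_cast hQ)
  set s := √(2 * B * log (Fintype.card Q))
  have hs : 0 < s := Real.sqrt_pos.2 (by positivity)
  have hs2 : s ^ 2 = 2 * B * log (Fintype.card Q) := Real.sq_sqrt (by positivity)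
  -- the optimal inverse temperature `t = s / (B c)` balances the two terms of the bound
  refine (empiricalRad_le_log_card_add_div a (t := s / (B * c)) (by positivity) ha).trans_eq ?_
  field_simp
  linarith

end Massart

lemma sum_sgn_mul_le_add {B : ℕ} (ε : Fin B → Bool) {u v : Fin B → ℝ} {δ : ℝ}
    (h : ∀ i, |u i - v i| ≤ δ) : ∑ i, sgn (ε i) * u i ≤ ∑ i, sgn (ε i) * v i + B * δ := by
  have : ∀ i, sgn (ε i) * u i ≤ sgn (ε i) * v i + δ := fun i => by
    have := sgn_mul_le_abs (ε i) (u i - v i)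
    linarith [h i, mul_sub (sgn (ε i)) (u i) (v i)]
  simpa [Finset.sum_add_distrib] using Finset.sum_le_sum fun i (_ : i ∈ Finset.univ) => this i

lemma empiricalRad_le_of_approx {Y Q : Type} [Nonempty Y] [Finite Q] {B : ℕ}
    (u : Y → Fin B → ℝ) (v : Q → Fin B → ℝ) {δ : ℝ}
    (happrox : ∀ y, ∃ q, ∀ i, |u y i - v q i| ≤ δ) :
    empiricalRad u ≤ empiricalRad v + B * δ := by
  have hε : ∀ ε : Fin B → Bool,
      ⨆ y, ∑ i, sgn (ε i) * u y i ≤ (⨆ q, ∑ i, sgn (ε i) * v q i) + B * δ := fun ε =>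
    ciSup_le fun y => by
      obtain ⟨q, hq⟩ := happrox y
      exact (sum_sgn_mul_le_add ε hq).trans
        (add_le_add (le_ciSup (Set.finite_range fun q => ∑ i, sgn (ε i) * v q i).bddAbove q)
          le_rfl)
  unfold empiricalRad
  calc (∑ ε : Fin B → Bool, ⨆ y, ∑ i, sgn (ε i) * u y i) / 2 ^ B
      ≤ (∑ ε : Fin B → Bool, ((⨆ q, ∑ i, sgn (ε i) * v q i) + B * δ)) / 2 ^ B := by
        gcongr with ε; exact hε ε
    _ = _ := by simp [Finset.sum_add_distrib, add_div]

lemma exists_grid_near (K : ℕ) (hK : 0 < K) {y : ℝ} (hy : y ∈ Icc (0 : ℝ) 1) :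
    ∃ k : Fin (K + 1), |y - k / K| ≤ 1 / K := by
  have hK' : (0 : ℝ) < K := by exact_mod_cast hK
  have hyK : 0 ≤ y * K := mul_nonneg hy.1 hK'.le
  have hle : ⌊y * K⌋₊ ≤ K := Nat.floor_le_of_le (by nlinarith [hy.2])
  refine ⟨⟨⌊y * K⌋₊, Nat.lt_succ_of_le hle⟩, ?_⟩
  have hdiff : y - (⌊y * K⌋₊ : ℝ) / K = (y * K - ⌊y * K⌋₊) / K := by field_simp
  rw [Fin.val_mk, hdiff, abs_div, abs_of_pos hK', div_le_div_iff_of_pos_right hK', abs_le]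
  constructor <;> linarith [Nat.floor_le hyK, Nat.lt_floor_add_one (y * K)]

lemma ciSup_le_ciSup_add {ι : Type*} [Nonempty ι] {φ ψ : ι → ℝ} (hψ : BddAbove (range ψ))
    {c : ℝ} (h : ∀ i, φ i ≤ ψ i + c) : ⨆ i, φ i ≤ (⨆ i, ψ i) + c :=
  ciSup_le fun i => (h i).trans (add_le_add (le_ciSup hψ i) le_rfl)

lemma abs_ciSup_sub_ciSup_le {ι : Type*} [Nonempty ι] {φ ψ : ι → ℝ}
    (hφ : BddAbove (range φ)) (hψ : BddAbove (range ψ)) {c : ℝ}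
    (h : ∀ i, |φ i - ψ i| ≤ c) : |(⨆ i, φ i) - ⨆ i, ψ i| ≤ c := by
  refine abs_sub_le_iff.2 ⟨?_, ?_⟩ <;> rw [sub_le_iff_le_add']
  · exact ciSup_le_ciSup_add hψ fun i => by linarith [(abs_le.1 (h i)).2]
  · exact ciSup_le_ciSup_add hφ fun i => by linarith [(abs_le.1 (h i)).1]

def fzTerm {X : Type} (H : Set (X → ℝ)) (ℓ : ℝ → ℝ → ℝ) (L : ℝ) {j m : ℕ}
    (xj : Fin j → X) (xt : Fin m → X) (ε0 : Bool) (εr : Fin m → Bool)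
    (y : Fin j → ℝ) (x : X) (h : H) : ℝ :=
  2 * L * sgn ε0 * h.1 x + 2 * L * ∑ i, sgn (εr i) * h.1 (xt i) - ∑ i, ℓ (h.1 (xj i)) (y i)

def gz {X : Type} (H : Set (X → ℝ)) (ℓ : ℝ → ℝ → ℝ) (L : ℝ) {j m : ℕ}
    (xj : Fin j → X) (xt : Fin m → X) (ε0 : Bool) (εr : Fin m → Bool)
    (y : Fin j → ℝ) (p : X × X) : ℝ :=
  fz H ℓ L xj xt ε0 εr y p.2 - fz H ℓ L xj xt ε0 εr y p.1

section fz

variable {X : Type} {H : Set (X → ℝ)} {ℓ : ℝ → ℝ → ℝ} {L : ℝ} {j m : ℕ}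
  {xj : Fin j → X} {xt : Fin m → X} {ε0 : Bool} {εr : Fin m → Bool}

lemma bddAbove_range_fzTerm (hH : ∀ h ∈ H, ∀ x, h x ∈ Icc (0 : ℝ) 1)
    (hL : 0 ≤ L) (hl0 : LossNonneg ℓ) (y : Fin j → ℝ) (x : X) :
    BddAbove (range (fzTerm H ℓ L xj xt ε0 εr y x)) := by
  refine ⟨2 * L * (1 + m), ?_⟩
  rintro _ ⟨h, rfl⟩
  have hunit : ∀ b x, sgn b * h.1 x ≤ 1 := fun b x =>
    (sgn_mul_le_abs b _).trans (abs_le.2 ⟨by linarith [(hH h.1 h.2 x).1], (hH h.1 h.2 x).2⟩)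
  have hx : 2 * L * sgn ε0 * h.1 x ≤ 2 * L := by
    rw [mul_assoc]; exact mul_le_of_le_one_right (by positivity) (hunit ε0 x)
  have hxt : ∑ i, sgn (εr i) * h.1 (xt i) ≤ m := by
    simpa using Finset.sum_le_sum fun i (_ : i ∈ Finset.univ) => hunit (εr i) (xt i)
  have hℓ : 0 ≤ ∑ i, ℓ (h.1 (xj i)) (y i) := Finset.sum_nonneg fun i _ => hl0 _ _
  unfold fzTerm
  nlinarith [mul_le_mul_of_nonneg_left hxt hL]

lemma abs_fzTerm_sub_fzTerm_of_point (hH : ∀ h ∈ H, ∀ x, h x ∈ Icc (0 : ℝ) 1)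
    (hL : 0 ≤ L) (y : Fin j → ℝ) (x x' : X) (h : H) :
    |fzTerm H ℓ L xj xt ε0 εr y x' h - fzTerm H ℓ L xj xt ε0 εr y x h| ≤ 2 * L := by
  have hdiff : fzTerm H ℓ L xj xt ε0 εr y x' h - fzTerm H ℓ L xj xt ε0 εr y x h
      = 2 * L * sgn ε0 * (h.1 x' - h.1 x) := by unfold fzTerm; ring
  have hx := hH h.1 h.2 x
  have hx' := hH h.1 h.2 x'
  rw [hdiff, abs_mul, abs_mul, abs_sgn, abs_of_nonneg (by positivity), mul_one]
  exact mul_le_of_le_one_right (by positivity) (abs_le.2 ⟨by linarith [hx.2, hx'.1],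
    by linarith [hx.1, hx'.2]⟩)

lemma abs_fzTerm_sub_fzTerm_of_label (hH : ∀ h ∈ H, ∀ x, h x ∈ Icc (0 : ℝ) 1)
    (hlip : LossLip ℓ L) {y y' : Fin j → ℝ}
    (hy : ∀ i, y i ∈ Icc (0 : ℝ) 1) (hy' : ∀ i, y' i ∈ Icc (0 : ℝ) 1) (x : X) (h : H) :
    |fzTerm H ℓ L xj xt ε0 εr y x h - fzTerm H ℓ L xj xt ε0 εr y' x h| ≤
      L * ∑ i, |y i - y' i| := by
  have hdiff : fzTerm H ℓ L xj xt ε0 εr y x h - fzTerm H ℓ L xj xt ε0 εr y' x h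
      = ∑ i, (ℓ (h.1 (xj i)) (y' i) - ℓ (h.1 (xj i)) (y i)) := by
    unfold fzTerm; rw [Finset.sum_sub_distrib]; ring
  rw [hdiff, Finset.mul_sum]
  refine (Finset.abs_sum_le_sum_abs _ _).trans (Finset.sum_le_sum fun i _ => ?_)
  rw [abs_sub_comm (y i)]
  exact hlip.2 _ (hH h.1 h.2 (xj i)) _ (hy' i) _ (hy i)

variable [Nonempty H]

lemma abs_gz_le (hH : ∀ h ∈ H, ∀ x, h x ∈ Icc (0 : ℝ) 1) (hL : 0 ≤ L)
    (hl0 : LossNonneg ℓ) (y : Fin j → ℝ) (p : X × X) : |gz H ℓ L xj xt ε0 εr y p| ≤ 2 * L :=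
  abs_ciSup_sub_ciSup_le (bddAbove_range_fzTerm hH hL hl0 y p.2)
    (bddAbove_range_fzTerm hH hL hl0 y p.1) (abs_fzTerm_sub_fzTerm_of_point hH hL y p.1 p.2)

lemma abs_fz_sub_fz_of_label (hH : ∀ h ∈ H, ∀ x, h x ∈ Icc (0 : ℝ) 1)
    (hL : 0 ≤ L) (hl0 : LossNonneg ℓ) (hlip : LossLip ℓ L) {y y' : Fin j → ℝ}
    (hy : ∀ i, y i ∈ Icc (0 : ℝ) 1) (hy' : ∀ i, y' i ∈ Icc (0 : ℝ) 1) (x : X) :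
    |fz H ℓ L xj xt ε0 εr y x - fz H ℓ L xj xt ε0 εr y' x| ≤ L * ∑ i, |y i - y' i| :=
  abs_ciSup_sub_ciSup_le (bddAbove_range_fzTerm hH hL hl0 y x)
    (bddAbove_range_fzTerm hH hL hl0 y' x) (abs_fzTerm_sub_fzTerm_of_label hH hlip hy hy' x)

lemma abs_gz_sub_gz_le (hH : ∀ h ∈ H, ∀ x, h x ∈ Icc (0 : ℝ) 1)
    (hL : 0 ≤ L) (hl0 : LossNonneg ℓ) (hlip : LossLip ℓ L) {y y' : Fin j → ℝ}
    (hy : ∀ i, y i ∈ Icc (0 : ℝ) 1) (hy' : ∀ i, y' i ∈ Icc (0 : ℝ) 1) (p : X × X) :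
    |gz H ℓ L xj xt ε0 εr y p - gz H ℓ L xj xt ε0 εr y' p| ≤ 2 * L * ∑ i, |y i - y' i| := by
  have h2 := abs_fz_sub_fz_of_label (xj := xj) (xt := xt) (ε0 := ε0) (εr := εr) hH hL hl0 hlip
    hy hy' p.2
  have h1 := abs_fz_sub_fz_of_label (xj := xj) (xt := xt) (ε0 := ε0) (εr := εr) hH hL hl0 hlip
    hy hy' p.1
  unfold gz
  rw [abs_le] at h1 h2 ⊢
  constructor <;> linarith

end fz

lemma radG_le_of_grid {X : Type} {H : Set (X → ℝ)} [Nonempty H] {ℓ : ℝ → ℝ → ℝ} {L : ℝ}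
    {j m B : ℕ} (hH : ∀ h ∈ H, ∀ x, h x ∈ Icc (0 : ℝ) 1) (hlip : LossLip ℓ L)
    (hl0 : LossNonneg ℓ) (hL : 0 < L) (hj : 1 ≤ j) (hB : 0 < B)
    (xj : Fin j → X) (xt : Fin m → X) (ε0 : Bool) (εr : Fin m → Bool) {K : ℕ} (hK : 0 < K) :
    radG H ℓ L xj xt ε0 εr B ≤
      2 * L * √(2 * B * (j * log (K + 1))) + B * (2 * L * (j / K)) := by
  refine Real.iSup_le (fun pts => ?_) (by positivity)
  set g := gz H ℓ L xj xt ε0 εr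
  set grid : (Fin j → Fin (K + 1)) → Fin j → ℝ := fun q i => (q i : ℝ) / K
  have hgrid : ∀ q i, grid q i ∈ Icc (0 : ℝ) 1 := fun q i =>
    ⟨by positivity, div_le_one_of_le₀ (by exact_mod_cast Nat.lt_succ_iff.1 (q i).2)
      (Nat.cast_nonneg _)⟩
  have hnet : ∀ yv : Fin j → UI, ∃ q, ∀ i,
      |g (fun i' => yv i') (pts i) - g (grid q) (pts i)| ≤ 2 * L * (j / K) := fun yv => by
    choose q hq using fun i' => exists_grid_near K hK (yv i').2
    refine ⟨q, fun i => (abs_gz_sub_gz_le hH hL.le hl0 hlip (fun i' => (yv i').2) (hgrid q)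
      (pts i)).trans ?_⟩
    gcongr
    refine (Finset.sum_le_sum fun i' (_ : i' ∈ Finset.univ) => hq i').trans_eq ?_
    simp only [Finset.sum_const, Finset.card_univ, Fintype.card_fin, nsmul_eq_mul]
    ring
  have hcard : 2 ≤ Fintype.card (Fin j → Fin (K + 1)) := by
    simpa using Nat.le_self_pow (by omega) (K + 1) |>.trans' (by omega)
  calc empiricalRad (fun (yv : Fin j → UI) i => g (fun i' => yv i') (pts i))
      ≤ empiricalRad (fun q i => g (grid q) (pts i)) + B * (2 * L * (j / K)) :=
        empiricalRad_le_of_approx _ _ hnet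
    _ ≤ 2 * L * √(2 * B * (j * log (K + 1))) + B * (2 * L * (j / K)) := by
        gcongr
        refine (empiricalRad_le_massart _ (by positivity) hB hcard fun q i =>
          abs_gz_le hH hL.le hl0 _ _).trans_eq ?_
        simp [Real.log_pow]

lemma le_mul_sqrt_of_sq_le {x c y : ℝ} (hc : 0 ≤ c) (h : x ^ 2 ≤ c ^ 2 * y) : x ≤ c * √y := by
  refine (Real.le_sqrt_of_sq_le h).trans_eq ?_
  rw [Real.sqrt_mul (sq_nonneg c), Real.sqrt_sq hc]

lemma ceil_grid_bound_le {L : ℝ} {j B : ℕ} (hL : 1 ≤ L) (hj : 1 ≤ j) (hB : 2 ≤ B) :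
    1 / (B : ℝ) * (2 * L * √(2 * B * (j * log (⌈j * L * B⌉₊ + 1))) +
        B * (2 * L * (j / ⌈j * L * B⌉₊))) ≤
      6 * √((j : ℝ) * L ^ 2 * log (j * L * B) / B) := by
  have hB' : (2 : ℝ) ≤ B := by exact_mod_cast hB
  have hj' : (1 : ℝ) ≤ j := by exact_mod_cast hj
  have hjL : 1 ≤ (j : ℝ) * L := one_le_mul_of_one_le_of_one_le hj' hL
  have hjL2 : 1 ≤ (j : ℝ) * L ^ 2 := one_le_mul_of_one_le_of_one_le hj' (one_le_pow₀ hL)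
  set t : ℝ := j * L * B
  have ht : 2 ≤ t := by nlinarith
  set K := ⌈t⌉₊
  have hKt : t ≤ K := Nat.le_ceil t
  have hlogK : log (K + 1) ≤ 2 * log t := by
    have hKt2 : (K : ℝ) + 1 ≤ t ^ 2 := by nlinarith [Nat.ceil_lt_add_one (by linarith : 0 ≤ t)]
    simpa [Real.log_pow] using Real.log_le_log (by positivity) hKt2
  have hlogt : 1 / 2 ≤ log t :=
    (Real.log_le_log (by norm_num) ht).trans' (by linarith [Real.log_two_gt_d9])
  have hT : 1 / (B : ℝ) ≤ √((j : ℝ) * L ^ 2 * log t / B) := by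
    refine Real.le_sqrt_of_sq_le ?_
    rw [div_pow, le_div_iff₀ (by positivity)]
    field_simp
    have : 1 ≤ (B : ℝ) * log t := by nlinarith
    nlinarith
  have hmain : 2 * L / B * √(2 * B * (j * log (K + 1))) ≤
      4 * √((j : ℝ) * L ^ 2 * log t / B) := by
    refine le_mul_sqrt_of_sq_le (by norm_num) ?_
    have hlogK0 : 0 ≤ log (K + 1) := Real.log_nonneg (by linarith [K.cast_nonneg (α := ℝ)])
    rw [mul_pow, Real.sq_sqrt (by positivity)]
    field_simp
    nlinarith [mul_le_mul_of_nonneg_left hlogK (by positivity : (0 : ℝ) ≤ 8 * L ^ 2 * j * B)]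
  have herr : B * (2 * L * (j / K)) ≤ 2 := by
    rw [mul_div, ← mul_div_assoc, div_le_iff₀ (by positivity)]
    nlinarith
  calc 1 / (B : ℝ) * (2 * L * √(2 * B * (j * log (K + 1))) + B * (2 * L * (j / K)))
      = 2 * L / B * √(2 * B * (j * log (K + 1))) + 1 / B * (B * (2 * L * (j / K))) := by
        ring
    _ ≤ 4 * √((j : ℝ) * L ^ 2 * log t / B) + 1 / B * 2 := by gcongr
    _ ≤ 6 * √((j : ℝ) * L ^ 2 * log t / B) := by linarith

lemma sqrt_rate_le_two_mul_sqrt_rate {L : ℝ} {j m B : ℕ} (hL : 1 ≤ L) (hj : 1 ≤ j)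
    (hN : 2 * (j + m + 1) ≤ B + m) :
    √((j : ℝ) * L ^ 2 * log (j * L * B) / B) ≤
      2 * √(2 * (j : ℝ) * L ^ 2 * log (j * L * (B + m : ℕ) / 2) / ((B + m : ℕ) : ℝ)) := by
  have hB' : (4 : ℝ) ≤ B := by exact_mod_cast (by omega : 4 ≤ B)
  have hmB : (m : ℝ) ≤ B := by exact_mod_cast (by omega : m ≤ B)
  have hj' : (1 : ℝ) ≤ j := by exact_mod_cast hj
  have hjL : 1 ≤ (j : ℝ) * L := one_le_mul_of_one_le_of_one_le hj' hL
  set N : ℝ := ((B + m : ℕ) : ℝ)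
  have hN : N = B + m := by push_cast [N]; ring
  set P : ℝ := j * L * N / 2
  have hP : 2 ≤ P := by simp only [P, hN]; nlinarith
  have hlog : log (j * L * B) ≤ 2 * log P := by
    have hP2 : (j : ℝ) * L * B ≤ P ^ 2 := by simp only [P, hN] at hP ⊢; nlinarith
    simpa [Real.log_pow] using Real.log_le_log (by positivity) hP2
  have hlogP : 0 ≤ log P := Real.log_nonneg (by linarith)
  refine le_mul_sqrt_of_sq_le (by norm_num) ?_
  have hlogB : 0 ≤ log (j * L * B) := Real.log_nonneg (by nlinarith)
  rw [Real.sq_sqrt (by positivity), div_le_iff₀ (by positivity)]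
  have hBN : 1 / 2 ≤ B / N := by rw [le_div_iff₀ (by rw [hN]; positivity)]; linarith
  have hjL2 : 0 ≤ (j : ℝ) * L ^ 2 := by positivity
  calc (j : ℝ) * L ^ 2 * log (j * L * B) ≤ 8 * (j * L ^ 2 * log P) * (1 / 2) := by
        nlinarith [mul_le_mul_of_nonneg_left hlog hjL2]
    _ ≤ 8 * (j * L ^ 2 * log P) * (B / N) := by gcongr
    _ = _ := by ring

lemma one_div_mul_radG_le {X : Type} {H : Set (X → ℝ)} {ℓ : ℝ → ℝ → ℝ} {L : ℝ} {j m B : ℕ}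
    (hH : ∀ h ∈ H, ∀ x, h x ∈ Icc (0 : ℝ) 1) (hne : H.Nonempty) (hlip : LossLip ℓ L)
    (hl0 : LossNonneg ℓ) (hL : 1 ≤ L) (hj : 1 ≤ j) (hB : 2 ≤ B)
    (xj : Fin j → X) (xt : Fin m → X) (ε0 : Bool) (εr : Fin m → Bool) :
    1 / (B : ℝ) * radG H ℓ L xj xt ε0 εr B ≤
      6 * √((j : ℝ) * L ^ 2 * log (j * L * B) / B) := by
  have := hne.to_subtype
  have hK : 0 < ⌈(j : ℝ) * L * B⌉₊ := Nat.ceil_pos.2 (by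
    have : (0 : ℝ) < j := by exact_mod_cast hj
    have : (0 : ℝ) < B := by exact_mod_cast (by omega : 0 < B)
    positivity)
  calc 1 / (B : ℝ) * radG H ℓ L xj xt ε0 εr B
      ≤ 1 / (B : ℝ) * (2 * L * √(2 * B * (j * log (⌈j * L * B⌉₊ + 1))) +
          B * (2 * L * (j / ⌈j * L * B⌉₊))) := by
        gcongr
        exact radG_le_of_grid hH hlip hl0 (by linarith) hj (by omega) xj xt ε0 εr hK
    _ ≤ 6 * √((j : ℝ) * L ^ 2 * log (j * L * B) / B) := ceil_grid_bound_le hL hj hB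

/-- **Lemma 9.** There is a universal constant `C` such that for all
`j ≥ 1`, `L ≥ 1`, `B ≥ 2`, and every `z_j`,
`(1/B)·Rad_B(G_{z_j}) ≤ C·√(jL²log(jLB)/B)`; consequently, in the setting `M ≤ N/2`,
`B = N − M + j + 1` (here `N = B + m`, `M = j + m + 1`),
`sup_{z_j} (1/B)·Rad_B(G_{z_j}) ≤ C·√(2jL²log(jLN/2)/N)`. -/
theorem radG_bound :
    ∃ C : ℝ, 0 < C ∧
      (∀ (X : Type) (H : Set (X → ℝ)) (ℓ : ℝ → ℝ → ℝ) (L : ℝ) (j m B : ℕ),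
        (∀ h ∈ H, ∀ x, h x ∈ Icc (0:ℝ) 1) → H.Nonempty →
        LossLip ℓ L → LossNonneg ℓ → 1 ≤ L → 1 ≤ j → 2 ≤ B →
        ∀ (xj : Fin j → X) (xt : Fin m → X) (ε0 : Bool) (εr : Fin m → Bool),
          (1 / (B : ℝ)) * radG H ℓ L xj xt ε0 εr B ≤
            C * Real.sqrt ((j : ℝ) * L ^ 2 * Real.log ((j : ℝ) * L * B) / B)) ∧
      (∀ (X : Type) (H : Set (X → ℝ)) (ℓ : ℝ → ℝ → ℝ) (L : ℝ) (j m B : ℕ),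
        (∀ h ∈ H, ∀ x, h x ∈ Icc (0:ℝ) 1) → H.Nonempty →
        LossLip ℓ L → LossNonneg ℓ → 1 ≤ L → 1 ≤ j →
        2 * (j + m + 1) ≤ B + m →
        (⨆ (xj : Fin j → X) (xt : Fin m → X) (ε0 : Bool) (εr : Fin m → Bool),
            (1 / (B : ℝ)) * radG H ℓ L xj xt ε0 εr B) ≤
          C * Real.sqrt (2 * (j : ℝ) * L ^ 2 *
            Real.log ((j : ℝ) * L * (B + m : ℕ) / 2) / ((B + m : ℕ) : ℝ))) := by
  refine ⟨12, by norm_num, ?_, ?_⟩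
  · intro X H ℓ L j m B hH hne hlip hl0 hL hj hB xj xt ε0 εr
    refine (one_div_mul_radG_le hH hne hlip hl0 hL hj hB xj xt ε0 εr).trans ?_
    gcongr
    norm_num
  · intro X H ℓ L j m B hH hne hlip hl0 hL hj hN
    have hB : 2 ≤ B := by omega
    set R := 12 * √(2 * (j : ℝ) * L ^ 2 * log (j * L * (B + m : ℕ) / 2) / ((B + m : ℕ) : ℝ))
    have hR : 0 ≤ R := by positivity
    have hbound : ∀ (xj : Fin j → X) (xt : Fin m → X) ε0 εr,
        1 / (B : ℝ) * radG H ℓ L xj xt ε0 εr B ≤ R := fun xj xt ε0 εr =>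
      (one_div_mul_radG_le hH hne hlip hl0 hL hj hB xj xt ε0 εr).trans
        (by linarith [sqrt_rate_le_two_mul_sqrt_rate hL hj hN])
    exact Real.iSup_le (fun xj => Real.iSup_le (fun xt => Real.iSup_le (fun ε0 =>
      Real.iSup_le (hbound xj xt ε0) hR) hR) hR) hR

end
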